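/- The Knaster–Kuratowski fan X is connected. -/

import Mathlib

open Set

/-- The apex of the Knaster–Kuratowski fan. -/
noncomputable def kkApex : ℝ × ℝ := (1/2, 1/2)

/-- The Cantor set, viewed inside `[0,1] × {0} ⊆ ℝ²` via first coordinates. -/
noncomputable def kkCantor : Set ℝ := cantorSet

/-- `C₁`: the endpoints of the open intervals removed in the construction of the
Cantor set, i.e. points `x` of the Cantor set which are an endpoint of a maximal
open interval disjoint from the Cantor set with both endpoints in the Cantor set. -/
def kkEndpoints : Set ℝ :=
  {x | x ∈ cantorSet ∧ ∃ a ∈ cantorSet, ∃ b ∈ cantorSet,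
    a < b ∧ Ioo a b ∩ cantorSet = ∅ ∧ (x = a ∨ x = b)}

/-- The Knaster–Kuratowski fan: over endpoints `x ∈ C₁` take the points of the
segment from `(x,0)` to the apex with rational second coordinate, over the other
Cantor points take the points with irrational second coordinate. -/
noncomputable def kkFan : Set (ℝ × ℝ) :=
  ⋃ x ∈ cantorSet, {p ∈ segment ℝ (x, (0:ℝ)) kkApex |
    (x ∈ kkEndpoints ∧ ∃ q : ℚ, p.2 = (q : ℝ)) ∨ (x ∉ kkEndpoints ∧ Irrational p.2)}

/-!
Suppose closed sets `F`, `G` of the plane separate the fan, with the apex in `F`; replacing `G`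
by the closure of its trace on the fan we may assume `G ⊆ closure (kkFan \ F)`. Every full
segment `L_x` lies in `closure kkFan ⊆ F ∪ G`, so a segment meeting `G` is connected from the
apex to `G` and meets `F ∩ G`, at a height that must be rational unless `x` is an endpoint.
The base points of the segments meeting `G` form a nonempty closed subset `N` of the Cantor set,
and the endpoints accumulate at every point of `N`: a point of `kkFan \ F` near `G` can be moved
to the segment over a nearby endpoint without entering `F`. Baire's theorem on `N` then rules
out covering `N` by its countably many endpoints and the countably many closed sets
`{x | the point of L_x at height q lies in F ∩ G}`, `q ∈ ℚ`, each of which misses all endpoints.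
-/

open Filter Topology

theorem exists_notMem_of_accPt {Y ι : Type*} [TopologicalSpace Y] [T1Space Y] [BaireSpace Y]
    [Nonempty Y] [Countable ι] {D : Set Y} (hD : D.Countable) (hacc : ∀ y, AccPt y (𝓟 D))
    {F : ι → Set Y} (hF : ∀ i, IsClosed (F i)) (hFD : ∀ i, Disjoint (F i) D) :
    ∃ y ∉ D, ∀ i, y ∉ F i := by
  by_contra! hcover
  have := hD.to_subtype
  obtain ⟨j, y, hy⟩ := nonempty_interior_of_iUnion_of_closed
    (f := Sum.elim F fun d : D => {(d : Y)})
    (by rintro (i | d); exacts [hF i, isClosed_singleton])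
    (eq_univ_of_forall fun y => by
      by_cases hy : y ∈ D
      · exact mem_iUnion.2 ⟨Sum.inr ⟨y, hy⟩, rfl⟩
      · obtain ⟨i, hi⟩ := hcover y hy
        exact mem_iUnion.2 ⟨Sum.inl i, hi⟩)
  obtain ⟨z, ⟨hzU, hzD⟩, hzy⟩ := accPt_iff_nhds.1 (hacc y) _ (isOpen_interior.mem_nhds hy)
  rcases j with i | d
  · exact disjoint_left.1 (hFD i) (interior_subset hzU) hzD
  · exact hzy ((interior_subset hzU).trans (interior_subset hy).symm)

lemma accPt_subtype_of_mem_closure {α : Type*} [TopologicalSpace α] {N D : Set α} {y : N}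
    (h : (y : α) ∈ closure ((D ∩ N) \ {(y : α)})) : AccPt y (𝓟 (Subtype.val ⁻¹' D)) := by
  refine accPt_iff_nhds.2 fun U hU => ?_
  obtain ⟨V, hV, hVU⟩ := (mem_nhds_subtype N y U).1 hU
  obtain ⟨z, hzV, ⟨hzD, hzN⟩, hzy⟩ := mem_closure_iff_nhds.1 h V hV
  exact ⟨⟨z, hzN⟩, ⟨hVU hzV, hzD⟩, fun h => hzy (congrArg Subtype.val h)⟩

lemma div_three_mem_cantorSet {x : ℝ} (hx : x ∈ cantorSet) : x / 3 ∈ cantorSet := by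
  rw [cantorSet_eq_union_halves]
  exact Or.inl ⟨x, hx, rfl⟩

lemma two_add_div_three_mem_cantorSet {x : ℝ} (hx : x ∈ cantorSet) :
    (2 + x) / 3 ∈ cantorSet := by
  rw [cantorSet_eq_union_halves]
  exact Or.inr ⟨x, hx, rfl⟩

lemma one_mem_cantorSet : (1 : ℝ) ∈ cantorSet := by
  refine mem_iInter.2 fun n => ?_
  induction n with
  | zero => simp
  | succ n ih => exact Or.inr ⟨1, ih, by norm_num⟩

def cantorGaps : Set (ℝ × ℝ) :=
  {g | g.1 ∈ cantorSet ∧ g.2 ∈ cantorSet ∧ g.1 < g.2 ∧ Ioo g.1 g.2 ∩ cantorSet = ∅}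

lemma mem_cantorGaps_iff {g : ℝ × ℝ} : g ∈ cantorGaps ↔
    g.1 ∈ cantorSet ∧ g.2 ∈ cantorSet ∧ g.1 < g.2 ∧ ∀ y ∈ cantorSet, y ≤ g.1 ∨ g.2 ≤ y := by
  simp only [cantorGaps, mem_ofPred_eq, eq_empty_iff_forall_notMem, mem_inter_iff, mem_Ioo]
  grind

lemma mem_kkEndpoints_of_mem_cantorGaps {g : ℝ × ℝ} (hg : g ∈ cantorGaps) :
    g.1 ∈ kkEndpoints ∧ g.2 ∈ kkEndpoints :=
  ⟨⟨hg.1, g.1, hg.1, g.2, hg.2.1, hg.2.2.1, hg.2.2.2, Or.inl rfl⟩,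
    ⟨hg.2.1, g.1, hg.1, g.2, hg.2.1, hg.2.2.1, hg.2.2.2, Or.inr rfl⟩⟩

lemma cantorGaps_pairwiseDisjoint : cantorGaps.PairwiseDisjoint fun g => Ioo g.1 g.2 := by
  intro g hg g' hg' hne
  refine disjoint_left.2 fun c ⟨h1, h2⟩ ⟨h1', h2'⟩ => hne ?_
  obtain ⟨ha, hb, -, hgap⟩ := mem_cantorGaps_iff.1 hg
  obtain ⟨ha', hb', -, hgap'⟩ := mem_cantorGaps_iff.1 hg'
  ext <;> grind [hgap _ ha', hgap _ hb', hgap' _ ha, hgap' _ hb]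

lemma kkEndpoints_countable : kkEndpoints.Countable := by
  have hgaps : cantorGaps.Countable :=
    cantorGaps_pairwiseDisjoint.countable_of_isOpen (fun _ _ => isOpen_Ioo)
      fun _ hg => nonempty_Ioo.2 hg.2.2.1
  refine ((hgaps.image Prod.fst).union (hgaps.image Prod.snd)).mono ?_
  rintro x ⟨-, a, ha, b, hb, hab, hgap, rfl | rfl⟩
  · exact Or.inl ⟨(x, b), ⟨ha, hb, hab, hgap⟩, rfl⟩
  · exact Or.inr ⟨(a, x), ⟨ha, hb, hab, hgap⟩, rfl⟩

lemma middle_mem_cantorGaps : ((1 / 3 : ℝ), (2 / 3 : ℝ)) ∈ cantorGaps := by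
  refine mem_cantorGaps_iff.2 ⟨by simpa using div_three_mem_cantorSet one_mem_cantorSet,
    by simpa using two_add_div_three_mem_cantorSet zero_mem_cantorSet, by norm_num,
    fun c hc => ?_⟩
  rw [cantorSet_eq_union_halves] at hc
  rcases hc with ⟨y, hy, rfl⟩ | ⟨y, hy, rfl⟩
  · exact Or.inl (by linarith [(cantorSet_subset_unitInterval hy).2])
  · exact Or.inr (by linarith [(cantorSet_subset_unitInterval hy).1])

lemma div_three_mem_cantorGaps {g : ℝ × ℝ} (hg : g ∈ cantorGaps) :
    (g.1 / 3, g.2 / 3) ∈ cantorGaps := by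
  obtain ⟨ha, hb, hab, hgap⟩ := mem_cantorGaps_iff.1 hg
  refine mem_cantorGaps_iff.2 ⟨div_three_mem_cantorSet ha, div_three_mem_cantorSet hb,
    by dsimp only; linarith, fun c hc => ?_⟩
  rw [cantorSet_eq_union_halves] at hc
  rcases hc with ⟨y, hy, rfl⟩ | ⟨y, hy, rfl⟩
  · rcases hgap y hy with h | h
    · exact Or.inl (by dsimp only; linarith)
    · exact Or.inr (by dsimp only; linarith)
  · exact Or.inr (by linarith [(cantorSet_subset_unitInterval hy).1,
      (cantorSet_subset_unitInterval hb).2])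

lemma two_add_div_three_mem_cantorGaps {g : ℝ × ℝ} (hg : g ∈ cantorGaps) :
    ((2 + g.1) / 3, (2 + g.2) / 3) ∈ cantorGaps := by
  obtain ⟨ha, hb, hab, hgap⟩ := mem_cantorGaps_iff.1 hg
  refine mem_cantorGaps_iff.2 ⟨two_add_div_three_mem_cantorSet ha,
    two_add_div_three_mem_cantorSet hb, by dsimp only; linarith, fun c hc => ?_⟩
  rw [cantorSet_eq_union_halves] at hc
  rcases hc with ⟨y, hy, rfl⟩ | ⟨y, hy, rfl⟩
  · exact Or.inl (by linarith [(cantorSet_subset_unitInterval hy).2,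
      (cantorSet_subset_unitInterval ha).1])
  · rcases hgap y hy with h | h
    · exact Or.inl (by dsimp only; linarith)
    · exact Or.inr (by dsimp only; linarith)

lemma exists_mem_cantorGaps_near {x : ℝ} (hx : x ∈ cantorSet) (n : ℕ) :
    ∃ g ∈ cantorGaps, |x - g.1| ≤ (1 / 3) ^ n ∧ |x - g.2| ≤ (1 / 3) ^ n := by
  induction n generalizing x with
  | zero =>
    obtain ⟨h0, h1⟩ := cantorSet_subset_unitInterval hx
    exact ⟨_, middle_mem_cantorGaps, abs_le.2 ⟨by norm_num; linarith, by norm_num; linarith⟩,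
      abs_le.2 ⟨by norm_num; linarith, by norm_num; linarith⟩⟩
  | succ n ih =>
    rw [cantorSet_eq_union_halves] at hx
    rcases hx with ⟨y, hy, rfl⟩ | ⟨y, hy, rfl⟩
    · obtain ⟨g, hg, h1, h2⟩ := ih hy
      refine ⟨_, div_three_mem_cantorGaps hg, ?_, ?_⟩ <;>
        simp only [← sub_div, abs_div, pow_succ] <;> norm_num <;> linarith
    · obtain ⟨g, hg, h1, h2⟩ := ih hy
      refine ⟨_, two_add_div_three_mem_cantorGaps hg, ?_, ?_⟩ <;>
        simp only [← sub_div, add_sub_add_left_eq_sub, abs_div, pow_succ] <;> norm_num <;> linarith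

lemma mem_closure_kkEndpoints_diff {x : ℝ} (hx : x ∈ cantorSet) (x₀ : ℝ) :
    x ∈ closure (kkEndpoints \ {x₀}) := by
  refine Metric.mem_closure_iff.2 fun ε hε => ?_
  obtain ⟨n, hn⟩ := exists_pow_lt_of_lt_one hε (by norm_num : (1 / 3 : ℝ) < 1)
  obtain ⟨g, hg, h1, h2⟩ := exists_mem_cantorGaps_near hx n
  obtain ⟨hg1, hg2⟩ := mem_kkEndpoints_of_mem_cantorGaps hg
  by_cases h : g.1 = x₀
  · exact ⟨g.2, ⟨hg2, fun h' => hg.2.2.1.ne (h.trans h'.symm)⟩, h2.trans_lt hn⟩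
  · exact ⟨g.1, ⟨hg1, h⟩, h1.trans_lt hn⟩

def kkLine (x s : ℝ) : ℝ × ℝ := ((1 - 2 * s) * x + s, s)

def kkHeights (x : ℝ) : Set ℝ :=
  {s | (x ∈ kkEndpoints ∧ ∃ q : ℚ, s = q) ∨ (x ∉ kkEndpoints ∧ Irrational s)}

noncomputable def kkBase (p : ℝ × ℝ) : ℝ := (p.1 - p.2) / (1 - 2 * p.2)

lemma kkLine_half (x : ℝ) : kkLine x (1 / 2) = kkApex := by
  simp [kkLine, kkApex]

lemma kkBase_kkLine {x s : ℝ} (hs : s ≠ 1 / 2) : kkBase (kkLine x s) = x := by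
  have : 1 - 2 * s ≠ 0 := fun h => hs (by linarith)
  simp only [kkBase, kkLine]
  field_simp
  ring

lemma continuous_kkLine : Continuous fun q : ℝ × ℝ => kkLine q.1 q.2 := by
  unfold kkLine; fun_prop

lemma continuous_kkLine_left (s : ℝ) : Continuous fun x => kkLine x s := by
  unfold kkLine; fun_prop

lemma continuous_kkLine_right (x : ℝ) : Continuous (kkLine x) := by
  unfold kkLine; fun_prop

lemma continuousAt_kkBase {p : ℝ × ℝ} (hp : p.2 ≠ 1 / 2) : ContinuousAt kkBase p := by
  have : 1 - 2 * p.2 ≠ 0 := fun h => hp (by linarith)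
  unfold kkBase; fun_prop (disch := assumption)

lemma segment_eq_image_kkLine (x : ℝ) : segment ℝ (x, 0) kkApex = kkLine x '' Icc 0 (1 / 2) := by
  rw [segment_eq_image]
  ext ⟨u, v⟩
  simp only [mem_image, mem_Icc, kkLine, kkApex, Prod.ext_iff, Prod.smul_mk, smul_eq_mul,
    Prod.fst_add, Prod.snd_add]
  constructor
  · rintro ⟨t, ⟨h0, h1⟩, rfl, rfl⟩
    exact ⟨t / 2, ⟨by linarith, by linarith⟩, by ring, by ring⟩
  · rintro ⟨s, ⟨h0, h1⟩, rfl, rfl⟩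
    exact ⟨2 * s, ⟨by linarith, by linarith⟩, by ring, by ring⟩

lemma kkFan_eq : kkFan = ⋃ x ∈ cantorSet, kkLine x '' (Icc 0 (1 / 2) ∩ kkHeights x) := by
  refine iUnion₂_congr fun x _ => ?_
  ext p
  simp only [segment_eq_image_kkLine, mem_image, mem_inter_iff, kkHeights, mem_ofPred_eq]
  constructor
  · rintro ⟨⟨s, hs, rfl⟩, h⟩
    exact ⟨s, ⟨hs, h⟩, rfl⟩
  · rintro ⟨s, ⟨hs, h⟩, rfl⟩
    exact ⟨⟨s, hs, rfl⟩, h⟩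

lemma kkLine_mem_kkFan {x s : ℝ} (hx : x ∈ cantorSet) (hs : s ∈ Icc 0 (1 / 2))
    (hsx : s ∈ kkHeights x) : kkLine x s ∈ kkFan := by
  rw [kkFan_eq]
  exact mem_iUnion₂.2 ⟨x, hx, mem_image_of_mem _ ⟨hs, hsx⟩⟩

lemma exists_eq_kkLine_of_mem_kkFan {p : ℝ × ℝ} (hp : p ∈ kkFan) :
    ∃ x ∈ cantorSet, ∃ s ∈ Icc 0 (1 / 2) ∩ kkHeights x, kkLine x s = p := by
  rw [kkFan_eq] at hp
  simpa only [mem_iUnion₂, mem_image, exists_prop] using hp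

lemma kkApex_mem_kkFan : kkApex ∈ kkFan := by
  have h := (mem_kkEndpoints_of_mem_cantorGaps middle_mem_cantorGaps).1
  rw [← kkLine_half (1 / 3)]
  exact kkLine_mem_kkFan h.1 ⟨by norm_num, le_rfl⟩ (Or.inl ⟨h, 1 / 2, by norm_num⟩)

lemma dense_kkHeights (x : ℝ) : Dense (kkHeights x) := by
  by_cases hx : x ∈ kkEndpoints
  · have : kkHeights x = range ((↑) : ℚ → ℝ) := by ext s; simp [kkHeights, hx, eq_comm]
    exact this ▸ Rat.denseRange_cast
  · have : kkHeights x = {s | Irrational s} := by ext s; simp [kkHeights, hx]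
    exact this ▸ dense_irrational

lemma Icc_subset_closure_kkHeights (x : ℝ) :
    Icc 0 (1 / 2) ⊆ closure (Icc 0 (1 / 2) ∩ kkHeights x) := by
  calc Icc (0 : ℝ) (1 / 2) = closure (Ioo 0 (1 / 2)) := (closure_Ioo (by norm_num)).symm
    _ ⊆ closure (Ioo 0 (1 / 2) ∩ kkHeights x) :=
      closure_minimal ((dense_kkHeights x).open_subset_closure_inter isOpen_Ioo) isClosed_closure
    _ ⊆ closure (Icc 0 (1 / 2) ∩ kkHeights x) :=
      closure_mono (inter_subset_inter_left _ Ioo_subset_Icc_self)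

lemma kkLine_mem_closure_kkFan {x s : ℝ} (hx : x ∈ cantorSet) (hs : s ∈ Icc 0 (1 / 2)) :
    kkLine x s ∈ closure kkFan :=
  map_mem_closure (continuous_kkLine_right x)
    (Icc_subset_closure_kkHeights x hs) fun _ ht => kkLine_mem_kkFan hx ht.1 ht.2

def kkShadow (G : Set (ℝ × ℝ)) : Set ℝ :=
  {x ∈ cantorSet | ∃ s ∈ Icc 0 (1 / 2), kkLine x s ∈ G}

lemma isClosed_kkShadow {G : Set (ℝ × ℝ)} (hG : IsClosed G) : IsClosed (kkShadow G) := by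
  have hK : IsCompact ((cantorSet ×ˢ Icc (0 : ℝ) (1 / 2)) ∩
      (fun q : ℝ × ℝ => kkLine q.1 q.2) ⁻¹' G) :=
    (isCompact_cantorSet.prod isCompact_Icc).inter_right (hG.preimage continuous_kkLine)
  convert (hK.image continuous_fst).isClosed using 1
  ext x
  simp [kkShadow, and_assoc]

section Separation

variable {F G : Set (ℝ × ℝ)}

lemma exists_kkLine_mem_inter (hF : IsClosed F) (hG : IsClosed G) (hcover : kkFan ⊆ F ∪ G)
    (hapex : kkApex ∈ F) {x : ℝ} (hx : x ∈ kkShadow G) :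
    ∃ s ∈ Icc 0 (1 / 2), kkLine x s ∈ F ∩ G := by
  obtain ⟨hxC, s, hs, hsG⟩ := hx
  have hseg : kkLine x '' Icc 0 (1 / 2) ⊆ F ∪ G := by
    rintro _ ⟨t, ht, rfl⟩
    exact closure_minimal hcover (hF.union hG) (kkLine_mem_closure_kkFan hxC ht)
  obtain ⟨_, ⟨t, ht, rfl⟩, htFG⟩ := isPreconnected_closed_iff.1
    (isPreconnected_Icc.image _ (continuous_kkLine_right x).continuousOn) F G hF hG hseg
    ⟨kkApex, ⟨1 / 2, ⟨by norm_num, le_rfl⟩, kkLine_half x⟩, hapex⟩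
    ⟨_, mem_image_of_mem _ hs, hsG⟩
  exact ⟨t, ht, htFG⟩

lemma mem_closure_kkEndpoints_inter_kkShadow (hF : IsClosed F) (hcover : kkFan ⊆ F ∪ G)
    (hdisj : Disjoint kkFan (F ∩ G)) (hapex : kkApex ∈ F) (hGF : G ⊆ closure (kkFan \ F))
    {x : ℝ} (hx : x ∈ kkShadow G) (x₀ : ℝ) :
    x ∈ closure ((kkEndpoints ∩ kkShadow G) \ {x₀}) := by
  obtain ⟨-, s, -, hsG⟩ := hx
  have hs : s ≠ 1 / 2 := by
    rintro rfl
    exact disjoint_left.1 hdisj kkApex_mem_kkFan ⟨hapex, kkLine_half x ▸ hsG⟩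
  refine mem_closure_iff.2 fun U hU hxU => ?_
  have hW : kkBase ⁻¹' U ∈ 𝓝 (kkLine x s) :=
    (continuousAt_kkBase hs).preimage_mem_nhds (by rw [kkBase_kkLine hs]; exact hU.mem_nhds hxU)
  obtain ⟨_, hpW, hpX, hpF⟩ := mem_closure_iff_nhds.1 (hGF hsG) _ hW
  obtain ⟨y, hy, t, ⟨ht, -⟩, rfl⟩ := exists_eq_kkLine_of_mem_kkFan hpX
  have ht' : t ≠ 1 / 2 := by
    rintro rfl
    exact hpF (kkLine_half y ▸ hapex)
  rw [mem_preimage, kkBase_kkLine ht'] at hpW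
  have hV : U ∩ (fun y' => kkLine y' t) ⁻¹' Fᶜ ∈ 𝓝 y := inter_mem (hU.mem_nhds hpW)
    ((continuous_kkLine_left t).continuousAt.preimage_mem_nhds (hF.isOpen_compl.mem_nhds hpF))
  obtain ⟨e, ⟨heU, heF⟩, heE, he₀⟩ :=
    mem_closure_iff_nhds.1 (mem_closure_kkEndpoints_diff hy x₀) _ hV
  have hT : kkLine e ⁻¹' Fᶜ ∈ 𝓝 t :=
    (continuous_kkLine_right e).continuousAt.preimage_mem_nhds (hF.isOpen_compl.mem_nhds heF)
  obtain ⟨t', ht'F, ht'I, ht'H⟩ := mem_closure_iff_nhds.1 (Icc_subset_closure_kkHeights e ht) _ hT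
  have heG : kkLine e t' ∈ G := (hcover (kkLine_mem_kkFan heE.1 ht'I ht'H)).resolve_left ht'F
  exact ⟨e, heU, ⟨heE, heE.1, t', ht'I, heG⟩, he₀⟩

theorem disjoint_kkFan_of_subset_closure (hF : IsClosed F) (hG : IsClosed G)
    (hcover : kkFan ⊆ F ∪ G) (hdisj : Disjoint kkFan (F ∩ G)) (hapex : kkApex ∈ F)
    (hGF : G ⊆ closure (kkFan \ F)) : Disjoint kkFan G := by
  refine disjoint_left.2 fun p hpX hpG => ?_
  obtain ⟨x, hx, s, ⟨hs, -⟩, rfl⟩ := exists_eq_kkLine_of_mem_kkFan hpX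
  have : Nonempty (kkShadow G) := ⟨⟨x, hx, s, hs, hpG⟩⟩
  have : CompleteSpace (kkShadow G) := (isClosed_kkShadow hG).completeSpace_coe
  obtain ⟨⟨y, hyN⟩, hyE, hyQ⟩ := exists_notMem_of_accPt
    (ι := {q : ℚ // (q : ℝ) ∈ Icc 0 (1 / 2)}) (D := Subtype.val ⁻¹' kkEndpoints)
    (F := fun q => {y : kkShadow G | kkLine y q ∈ F ∩ G})
    (kkEndpoints_countable.preimage Subtype.val_injective)
    (fun y => accPt_subtype_of_mem_closure
      (mem_closure_kkEndpoints_inter_kkShadow hF hcover hdisj hapex hGF y.2 y))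
    (fun q => (hF.inter hG).preimage ((continuous_kkLine_left q).comp continuous_subtype_val))
    (fun q => disjoint_left.2 fun y hy hyE =>
      disjoint_left.1 hdisj (kkLine_mem_kkFan hyE.1 q.2 (Or.inl ⟨hyE, q, rfl⟩)) hy)
  obtain ⟨t, ht, htFG⟩ := exists_kkLine_mem_inter hF hG hcover hapex hyN
  by_cases hirr : Irrational t
  · exact disjoint_left.1 hdisj (kkLine_mem_kkFan hyN.1 ht (Or.inr ⟨hyE, hirr⟩)) htFG
  · obtain ⟨q, rfl⟩ := not_not.1 hirr
    exact hyQ ⟨q, ht⟩ htFG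

theorem disjoint_kkFan_of_separation (hF : IsClosed F) (hG : IsClosed G)
    (hcover : kkFan ⊆ F ∪ G) (hdisj : Disjoint kkFan (F ∩ G)) (hapex : kkApex ∈ F) :
    Disjoint kkFan G := by
  have hclG : closure (kkFan ∩ G) ⊆ G := closure_minimal inter_subset_right hG
  have hXG : kkFan ∩ G ⊆ kkFan \ F := fun p hp =>
    ⟨hp.1, fun hpF => disjoint_left.1 hdisj hp.1 ⟨hpF, hp.2⟩⟩
  have := disjoint_kkFan_of_subset_closure hF isClosed_closure
    (fun p hp => (hcover hp).imp_right fun hpG => subset_closure (mem_inter hp hpG))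
    (hdisj.mono_right (inter_subset_inter_right _ hclG)) hapex (closure_mono hXG)
  exact disjoint_left.2 fun p hpX hpG => disjoint_left.1 this hpX (subset_closure ⟨hpX, hpG⟩)

end Separation

/-- The Knaster–Kuratowski fan is connected. -/
theorem stmt_6 : IsConnected kkFan := by
  refine ⟨⟨kkApex, kkApex_mem_kkFan⟩,
    isPreconnected_closed_iff.2 fun F G hF hG hcover hFne hGne => ?_⟩
  by_contra hFG
  have hdisj : Disjoint kkFan (F ∩ G) :=
    disjoint_iff_inter_eq_empty.2 (not_nonempty_iff_eq_empty.1 hFG)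
  rcases hcover kkApex_mem_kkFan with hapex | hapex
  · exact not_disjoint_iff_nonempty_inter.2 hGne
      (disjoint_kkFan_of_separation hF hG hcover hdisj hapex)
  · exact not_disjoint_iff_nonempty_inter.2 hFne (disjoint_kkFan_of_separation hG hF
      (union_comm F G ▸ hcover) (inter_comm F G ▸ hdisj) hapex)
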